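/- In the two-site hopper example (eight histories with the amplitudes and final-site structure as specified), there is no zero cover consisting of exactly two subsets: there do not exist Z₁, Z₂ ⊆ Ω with Z₁ ∪ Z₂ = Ω and μ(Z₁) = μ(Z₂) = 0. In particular, every subset of quantum measure zero has at most four elements. -/
import Mathlib


open Complex

/-- Amplitudes of the eight fine-grained histories of the two-site hopper
(histories h₁,…,h₈ are indexed 0,…,7). -/
noncomputable def hopperAmp : Fin 8 → ℂ :=
  ![1/(2*Real.sqrt 2), -1/(2*Real.sqrt 2), -1/(2*Real.sqrt 2), -1/(2*Real.sqrt 2),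
    I/(2*Real.sqrt 2), -I/(2*Real.sqrt 2), I/(2*Real.sqrt 2), I/(2*Real.sqrt 2)]

/-- Final site of each history. -/
def hopperEnd : Fin 8 → Fin 2 := ![0, 1, 0, 1, 0, 1, 0, 1]

/-- The two-site hopper quantum measure. -/
noncomputable def hopperMu (S : Finset (Fin 8)) : ℝ :=
  ∑ s : Fin 2, Complex.normSq (∑ h ∈ S.filter (fun h => hopperEnd h = s), hopperAmp h)

def wre : Fin 8 → ℤ := ![1, -1, -1, -1, 0, 0, 0, 0]
def wim : Fin 8 → ℤ := ![0, 0, 0, 0, 1, -1, 1, 1]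

def Pzero (Z : Finset (Fin 8)) : Prop :=
  (∑ h ∈ Z.filter (fun h => hopperEnd h = 0), wre h) = 0 ∧
  (∑ h ∈ Z.filter (fun h => hopperEnd h = 0), wim h) = 0 ∧
  (∑ h ∈ Z.filter (fun h => hopperEnd h = 1), wre h) = 0 ∧
  (∑ h ∈ Z.filter (fun h => hopperEnd h = 1), wim h) = 0

instance : DecidablePred Pzero := fun _ => by unfold Pzero; infer_instance

lemma hamp (h : Fin 8) :
    hopperAmp h = (((wre h : ℤ) : ℂ) + ((wim h : ℤ) : ℂ) * I) * (1/(2*Real.sqrt 2)) := by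
  fin_cases h <;>
    norm_num [hopperAmp, wre, wim, Matrix.cons_val_succ', Matrix.cons_val_zero'] <;> ring

lemma term_eq (F : Finset (Fin 8)) :
    Complex.normSq (∑ h ∈ F, hopperAmp h) =
      (((∑ h ∈ F, wre h : ℤ) : ℝ)^2 + ((∑ h ∈ F, wim h : ℤ) : ℝ)^2) / 8 := by
  have h1 : (∑ h ∈ F, hopperAmp h)
      = ((((∑ h ∈ F, wre h : ℤ) : ℝ) : ℂ) + (((∑ h ∈ F, wim h : ℤ) : ℝ) : ℂ) * I)
        * (1/(2*Real.sqrt 2)) := by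
    rw [Finset.sum_congr rfl (fun h _ => hamp h), ← Finset.sum_mul]
    push_cast
    rw [Finset.sum_add_distrib, ← Finset.sum_mul]
  rw [h1, Complex.normSq_mul, Complex.normSq_add_mul_I]
  have h2 : ((1:ℂ)/(2*Real.sqrt 2)) = (((1/(2*Real.sqrt 2)) : ℝ) : ℂ) := by push_cast; ring
  rw [h2, Complex.normSq_ofReal]
  have h3 : (1/(2*Real.sqrt 2) : ℝ) * (1/(2*Real.sqrt 2)) = 1/8 := by
    have : Real.sqrt 2 * Real.sqrt 2 = 2 := Real.mul_self_sqrt (by norm_num)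
    field_simp
    nlinarith [this]
  rw [h3]; ring

lemma muzero_iff (Z : Finset (Fin 8)) : hopperMu Z = 0 ↔ Pzero Z := by
  have hmu : hopperMu Z =
      (((∑ h ∈ Z.filter (fun h => hopperEnd h = 0), wre h : ℤ) : ℝ)^2
        + ((∑ h ∈ Z.filter (fun h => hopperEnd h = 0), wim h : ℤ) : ℝ)^2
        + ((∑ h ∈ Z.filter (fun h => hopperEnd h = 1), wre h : ℤ) : ℝ)^2
        + ((∑ h ∈ Z.filter (fun h => hopperEnd h = 1), wim h : ℤ) : ℝ)^2) / 8 := by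
    rw [hopperMu, Fin.sum_univ_two, term_eq, term_eq]; ring
  constructor
  · intro h
    rw [hmu] at h
    set a := ((∑ h ∈ Z.filter (fun h => hopperEnd h = 0), wre h : ℤ) : ℝ) with ha
    set b := ((∑ h ∈ Z.filter (fun h => hopperEnd h = 0), wim h : ℤ) : ℝ) with hb
    set c := ((∑ h ∈ Z.filter (fun h => hopperEnd h = 1), wre h : ℤ) : ℝ) with hc
    set d := ((∑ h ∈ Z.filter (fun h => hopperEnd h = 1), wim h : ℤ) : ℝ) with hd
    have ha0 : a = 0 := by nlinarith [sq_nonneg a, sq_nonneg b, sq_nonneg c, sq_nonneg d]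
    have hb0 : b = 0 := by nlinarith [sq_nonneg a, sq_nonneg b, sq_nonneg c, sq_nonneg d]
    have hc0 : c = 0 := by nlinarith [sq_nonneg a, sq_nonneg b, sq_nonneg c, sq_nonneg d]
    have hd0 : d = 0 := by nlinarith [sq_nonneg a, sq_nonneg b, sq_nonneg c, sq_nonneg d]
    rw [ha] at ha0; rw [hb] at hb0; rw [hc] at hc0; rw [hd] at hd0
    exact ⟨by exact_mod_cast ha0, by exact_mod_cast hb0,
      by exact_mod_cast hc0, by exact_mod_cast hd0⟩
  · intro h
    rw [hmu, h.1, h.2.1, h.2.2.1, h.2.2.2]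
    norm_num

set_option maxRecDepth 100000 in
theorem hopper_no_two_set_zero_cover :
    (¬ ∃ Z₁ Z₂ : Finset (Fin 8),
        Z₁ ∪ Z₂ = Finset.univ ∧ hopperMu Z₁ = 0 ∧ hopperMu Z₂ = 0) ∧
      ∀ Z : Finset (Fin 8), hopperMu Z = 0 → Z.card ≤ 4 := by
  constructor
  · rintro ⟨Z₁, Z₂, hU, h1, h2⟩
    rw [muzero_iff] at h1 h2
    revert hU
    revert h2; revert h1
    revert Z₂; revert Z₁
    decide
  · intro Z hZ
    rw [muzero_iff] at hZ
    revert hZ; revert Z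
    decide
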